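/- Let δ : D → C be an injective coalgebra homomorphism of coalgebras over a field K. If the union of the iterated wedge powers satisfies ⋃_{n≥1} D^{∧_C^n} = C, then the coradical of C is contained in the image of δ: Corad(C) ⊆ Im(δ). -/

import Mathlib

open TensorProduct CategoryTheory

universe u

noncomputable section

variable (K : Type u) [Field K]

/-- `tpow C n = C^{⊗(n+1)}`. -/
def tpow (C : ModuleCat.{u} K) : ℕ → ModuleCat.{u} K
  | 0 => C
  | n + 1 => ModuleCat.of K (tpow C n ⊗[K] C)

/-- `tpowMap f n = f^{⊗(n+1)}`. -/
def tpowMap {C D : ModuleCat.{u} K} (f : C ⟶ D) : ∀ n : ℕ, tpow K C n ⟶ tpow K D n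
  | 0 => f
  | n + 1 => ModuleCat.ofHom (TensorProduct.map (tpowMap f n).hom f.hom)

variable (C : Type u) [AddCommGroup C] [Module K C] [Coalgebra K C]

/-- The `n`-th iterated comultiplication `Δ^n : C ⟶ C^{⊗(n+1)}`. -/
def itComul : ∀ n : ℕ, ModuleCat.of K C ⟶ tpow K (ModuleCat.of K C) n
  | 0 => 𝟙 (ModuleCat.of K C)
  | n + 1 =>
      ModuleCat.ofHom (TensorProduct.map (itComul n).hom (LinearMap.id) ∘ₗ
        (Coalgebra.comul (R := K) (A := C)))

variable {C} in
/-- Given an injective coalgebra map with image `D`, the wedge power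
`D^{∧_C^{n+1}} = Ker(p^{⊗(n+1)} ∘ Δ_C^n)`, where `p : C → C/D` is the quotient map. -/
def wedgePow {D : Type u} [AddCommGroup D] [Module K D] [Coalgebra K D]
    (δ : D →ₗc[K] C) (n : ℕ) : Submodule K C :=
  LinearMap.ker
    ((itComul K C n ≫
        tpowMap K (ModuleCat.ofHom (LinearMap.range δ.toLinearMap).mkQ :
          ModuleCat.of K C ⟶ ModuleCat.of K (C ⧸ LinearMap.range δ.toLinearMap)) n :
      ModuleCat.of K C ⟶ _).hom :
      C →ₗ[K] tpow K (ModuleCat.of K (C ⧸ LinearMap.range δ.toLinearMap)) n)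

/-- A subspace `V` of a coalgebra is a subcoalgebra if `Δ(V) ⊆ V ⊗ V` inside `C ⊗ C`. -/
def IsSubcoalgebra (V : Submodule K C) : Prop :=
  ∀ x ∈ V, Coalgebra.comul (R := K) x ∈
    LinearMap.range (TensorProduct.map V.subtype V.subtype)

/-- The coradical of a coalgebra: the sum of all its simple subcoalgebras. -/
def coradical : Submodule K C :=
  sSup {V : Submodule K C | IsSubcoalgebra K C V ∧ V ≠ ⊥ ∧
    ∀ W : Submodule K C, W ≤ V → IsSubcoalgebra K C W → W = ⊥ ∨ W = V}

/-! Let `V` be a simple subcoalgebra of `C` and `E = Im δ`. Over a field the intersection of two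
subcoalgebras is a subcoalgebra: an element of `V ⊗ V` killed by `p ⊗ id` and by `id ⊗ p`, where
`p : C → C/E`, lies in `(V ∩ E) ⊗ (V ∩ E)`. By simplicity either `V ⊆ E` or `V ∩ E = 0`. In the
second case `V` meets every wedge power trivially, by induction: if `x ∈ V ∩ D^{∧(n+1)}`, then
`Δx ∈ V ⊗ V` is killed by `(p^{⊗n} ∘ Δ^{n-1}) ⊗ p`, a tensor product of maps injective on `V`,
so `Δx = 0` and `x = (ε ⊗ id)(Δx) = 0`. Since the wedge powers exhaust `C`, this forces `V = 0`. -/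

namespace TensorProduct

section CommRing

variable {R : Type*} [CommRing R] {M N : Type*} [AddCommGroup M] [Module R M]
  [AddCommGroup N] [Module R N]

theorem rTensor_mkQ_eq_zero_of_mem_range_mapIncl {A : Submodule R M} {W : Submodule R N}
    {t : M ⊗[R] N} (ht : t ∈ LinearMap.range (mapIncl A W)) : A.mkQ.rTensor N t = 0 := by
  obtain ⟨s, rfl⟩ := ht
  rw [LinearMap.rTensor_map, (LinearMap.exact_subtype_mkQ A).linearMap_comp_eq_zero,
    map_zero_left, LinearMap.zero_apply]

theorem lTensor_mkQ_eq_zero_of_mem_range_mapIncl {U : Submodule R M} {B : Submodule R N}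
    {t : M ⊗[R] N} (ht : t ∈ LinearMap.range (mapIncl U B)) : B.mkQ.lTensor M t = 0 := by
  obtain ⟨s, rfl⟩ := ht
  rw [LinearMap.lTensor_map, (LinearMap.exact_subtype_mkQ B).linearMap_comp_eq_zero,
    map_zero_right, LinearMap.zero_apply]

end CommRing

section Field

variable {k : Type*} [Field k] {M N P Q : Type*} [AddCommGroup M] [Module k M]
  [AddCommGroup N] [Module k N] [AddCommGroup P] [Module k P] [AddCommGroup Q] [Module k Q]

theorem eq_zero_of_mem_range_mapIncl_of_map_eq_zero {V : Submodule k M} {W : Submodule k N}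
    {α : M →ₗ[k] P} {β : N →ₗ[k] Q} (hα : Disjoint V (LinearMap.ker α))
    (hβ : Disjoint W (LinearMap.ker β)) {t : M ⊗[k] N} (ht : t ∈ LinearMap.range (mapIncl V W))
    (h0 : map α β t = 0) : t = 0 := by
  obtain ⟨s, rfl⟩ := ht
  have hinj : Function.Injective (map (α.domRestrict V) (β.domRestrict W)) :=
    map_injective_of_flat_flat _ _ (LinearMap.injective_domRestrict_iff.mpr hα)
      (LinearMap.injective_domRestrict_iff.mpr hβ)
  have hs : s = 0 := hinj <| by
    rwa [map_zero, LinearMap.domRestrict, LinearMap.domRestrict, map_comp]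
  rw [hs, map_zero]

theorem mem_range_mapIncl_inf_right_of_lTensor_mkQ_eq_zero {U : Submodule k M}
    {W B : Submodule k N} {t : M ⊗[k] N} (ht : t ∈ LinearMap.range (mapIncl U W))
    (h0 : B.mkQ.lTensor M t = 0) : t ∈ LinearMap.range (mapIncl U (B ⊓ W)) := by
  obtain ⟨s, rfl⟩ := ht
  set g := B.mkQ ∘ₗ W.subtype
  have hs : g.lTensor U s = 0 := by
    refine Module.Flat.rTensor_preserves_injective_linearMap _ U.injective_subtype ?_
    rwa [map_zero, ← LinearMap.comp_apply, LinearMap.rTensor_comp_lTensor,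
      ← LinearMap.lTensor_map]
  obtain ⟨u, rfl⟩ := (Module.Flat.lTensor_exact U (LinearMap.exact_subtype_ker_map g) s).mp hs
  have hle : LinearMap.range (map U.subtype (W.subtype ∘ₗ (LinearMap.ker g).subtype)) ≤
      LinearMap.range (mapIncl U (B ⊓ W)) := by
    rw [range_map, range_mapIncl, Submodule.range_subtype]
    refine Submodule.map₂_le_map₂_right ?_
    rintro _ ⟨w, rfl⟩
    exact ⟨(Submodule.Quotient.mk_eq_zero B).mp w.2, (w : W).2⟩
  exact hle ⟨u, by rw [LinearMap.map_lTensor]⟩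

theorem mem_range_mapIncl_inf_left_of_rTensor_mkQ_eq_zero {A B : Submodule k M}
    {W : Submodule k N} {t : M ⊗[k] N} (ht : t ∈ LinearMap.range (mapIncl A W))
    (h0 : B.mkQ.rTensor N t = 0) : t ∈ LinearMap.range (mapIncl (B ⊓ A) W) := by
  have hcomm : TensorProduct.comm k M N t ∈ LinearMap.range (mapIncl W A) := by
    obtain ⟨s, rfl⟩ := ht
    exact ⟨TensorProduct.comm k A W s, map_comm _ _ _⟩
  obtain ⟨s, hs⟩ := mem_range_mapIncl_inf_right_of_lTensor_mkQ_eq_zero hcomm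
    (by rw [LinearMap.lTensor_comm, h0, map_zero])
  refine ⟨TensorProduct.comm k W ↥(B ⊓ A) s, ?_⟩
  rw [map_comm, hs, comm_comm]

end Field

end TensorProduct

section Coalgebra

variable {K C}

theorem Coalgebra.eq_zero_of_comul_eq_zero {x : C} (h : Coalgebra.comul (R := K) x = 0) :
    x = 0 := by
  simpa [h] using (Coalgebra.rTensor_counit_comul (R := K) x).symm

theorem IsSubcoalgebra.inf {V E : Submodule K C} (hV : IsSubcoalgebra K C V)
    (hE : IsSubcoalgebra K C E) : IsSubcoalgebra K C (V ⊓ E) := by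
  intro x hx
  have hleft := mem_range_mapIncl_inf_left_of_rTensor_mkQ_eq_zero (hV x hx.1)
    (rTensor_mkQ_eq_zero_of_mem_range_mapIncl (hE x hx.2))
  have hboth := mem_range_mapIncl_inf_right_of_lTensor_mkQ_eq_zero hleft
    (lTensor_mkQ_eq_zero_of_mem_range_mapIncl (hE x hx.2))
  rwa [inf_comm E V] at hboth

theorem isSubcoalgebra_range {D : Type*} [AddCommGroup D] [Module K D] [Coalgebra K D]
    (δ : D →ₗc[K] C) : IsSubcoalgebra K C (LinearMap.range δ.toLinearMap) := by
  rintro _ ⟨d, rfl⟩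
  change _ ∈ LinearMap.range (mapIncl _ _)
  rw [range_mapIncl, ← range_map]
  exact ⟨Coalgebra.comul d, CoalgHomClass.map_comp_comul_apply δ d⟩

end Coalgebra

section Wedge

variable {K C}

def wedgeMap (E : Submodule K C) (n : ℕ) : C →ₗ[K] tpow K (ModuleCat.of K (C ⧸ E)) n :=
  (itComul K C n ≫ tpowMap K (ModuleCat.ofHom E.mkQ) n).hom

theorem wedgePow_eq_ker_wedgeMap {D : Type u} [AddCommGroup D] [Module K D] [Coalgebra K D]
    (δ : D →ₗc[K] C) (n : ℕ) :
    wedgePow K δ n = LinearMap.ker (wedgeMap (LinearMap.range δ.toLinearMap) n) := rfl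

theorem ker_wedgeMap_zero (E : Submodule K C) : LinearMap.ker (wedgeMap E 0) = E :=
  Submodule.ker_mkQ E

theorem mem_ker_wedgeMap_succ (E : Submodule K C) (n : ℕ) {x : C} :
    x ∈ LinearMap.ker (wedgeMap E (n + 1)) ↔
      map (wedgeMap E n) E.mkQ (Coalgebra.comul (R := K) x) = 0 := by
  change map (tpowMap K (ModuleCat.ofHom E.mkQ) n).hom E.mkQ
      (map (itComul K C n).hom LinearMap.id (Coalgebra.comul x)) = 0 ↔ _
  rw [map_map, LinearMap.comp_id]
  rfl

theorem disjoint_ker_wedgeMap {V E : Submodule K C} (hV : IsSubcoalgebra K C V)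
    (hVE : Disjoint V E) (n : ℕ) : Disjoint V (LinearMap.ker (wedgeMap E n)) := by
  induction n with
  | zero => rwa [ker_wedgeMap_zero]
  | succ n ih =>
    refine Submodule.disjoint_def.mpr fun x hxV hx ↦
      Coalgebra.eq_zero_of_comul_eq_zero (K := K) ?_
    rw [mem_ker_wedgeMap_succ] at hx
    exact eq_zero_of_mem_range_mapIncl_of_map_eq_zero ih (by rwa [Submodule.ker_mkQ])
      (hV x hxV) hx

end Wedge

theorem stmt13 {D : Type u} [AddCommGroup D] [Module K D] [Coalgebra K D]
    (δ : D →ₗc[K] C)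
    (hexh : ∀ c : C, ∃ n : ℕ, c ∈ wedgePow K δ n) :
    coradical K C ≤ LinearMap.range δ.toLinearMap := by
  refine sSup_le fun V ⟨hV, hV_ne, hV_simple⟩ ↦ ?_
  rcases hV_simple _ inf_le_left (hV.inf (isSubcoalgebra_range δ)) with hbot | heq
  · obtain ⟨v, hvV, hv⟩ := (Submodule.ne_bot_iff V).mp hV_ne
    obtain ⟨n, hvn⟩ := hexh v
    rw [wedgePow_eq_ker_wedgeMap] at hvn
    exact absurd (Submodule.disjoint_def.mp
      (disjoint_ker_wedgeMap hV (disjoint_iff.mpr hbot) n) v hvV hvn) hv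
  · exact inf_eq_left.mp heq

end
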